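/- Under the Harten setup, regard Ŝ, F̂^{(i)}, Ĝ^{(i)} as functions of the conservative variables on the open set D = {(ρ, m, e) : ρ > 0, (γ−1)(e − ‖m‖²/(2ρ)) > 0}. Let L > 0 and let U : ℝ × ℝ^d → ℝ^{d+2} be continuously differentiable, taking values in D, satisfying the Euler equations pointwise ∂U/∂t + Σ_{i=1}^{d} ∂/∂x_i [F̂^{(i)}(U)] = 0, and spatially periodic: U(t, x + L·e_i) = U(t, x) for all t, x and each standard basis vector e_i of ℝ^d. Then the total entropy t ↦ ∫_{[0,L]^d} Ŝ(U(t,x)) dx is constant in t (its derivative vanishes for all t). -/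

import Mathlib

open MeasureTheory

/-- Harten's entropy function `S = β·ρ·(p·ρ^(−γ))^(1/(α+γ))`. -/
noncomputable def hartenS (γ α β ρ p : ℝ) : ℝ :=
  β * ρ * (p * ρ ^ (-γ)) ^ (1 / (α + γ))

/-- The Euler flux `F^(i) = (ρV_i, ρV_iV + p·e_i, (e+p)V_i) ∈ ℝ^(d+2)`. -/
noncomputable def eulerFlux (d : ℕ) (γ ρ p : ℝ) (V : Fin d → ℝ) (i : Fin d) :
    Fin (d + 2) → ℝ :=
  Fin.cons (α := fun _ => ℝ) (ρ * V i)
    (Fin.snoc (fun j => ρ * V i * V j + p * (if j = i then 1 else 0))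
      ((p / (γ - 1) + ρ * (∑ k, V k ^ 2) / 2 + p) * V i))

/-- Pressure as a function of the conservative variables `U = (ρ, m, e)`. -/
noncomputable def pOf (d : ℕ) (γ : ℝ) (U : Fin (d + 2) → ℝ) : ℝ :=
  (γ - 1) * (U (Fin.last (d + 1)) -
    (∑ i : Fin d, U (Fin.castSucc (Fin.succ i)) ^ 2) / (2 * U 0))

/-- Velocity `V = m/ρ` as a function of the conservative variables. -/
noncomputable def vOf (d : ℕ) (U : Fin (d + 2) → ℝ) : Fin d → ℝ :=
  fun i => U (Fin.castSucc (Fin.succ i)) / U 0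

/-- Harten's entropy function `Ŝ` as a function of the conservative variables. -/
noncomputable def hartenShat (d : ℕ) (γ α β : ℝ) (U : Fin (d + 2) → ℝ) : ℝ :=
  hartenS γ α β (U 0) (pOf d γ U)

/-- Euler flux `F̂^(i)` as a function of the conservative variables. -/
noncomputable def fluxHat (d : ℕ) (γ : ℝ) (i : Fin d) (U : Fin (d + 2) → ℝ) :
    Fin (d + 2) → ℝ :=
  eulerFlux d γ (U 0) (pOf d γ U) (vOf d U) i

/-!
Write `Ŝ = ρ φ(σ)` with `σ = p ρ^(-γ)` and `φ(σ) = β σ^(1/(α+γ))`. For a smooth solution the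
Euler equations give the mass equation `ρ_t + div(ρV) = 0` and the pressure equation
`p_t + V·∇p + γ p div V = 0`; together they say that `σ` is transported, `σ_t + V·∇σ = 0`, hence
`Ŝ_t + div(V Ŝ) = 0` pointwise. In conservative variables this is the entropy-pair identity
`DĜ^(i) = DŜ ∘ DF̂^(i)` on `D`, which holds direction by direction, so applying the linear map
`DŜ` to the Euler equations yields the entropy balance. Integrating the balance over the period
cell, the divergence term vanishes by the divergence theorem and periodicity, and
differentiation under the integral sign finishes the proof.
-/

theorem hasDerivAt_sum_sq {ι : Type*} [Fintype ι] {f : ℝ → ι → ℝ} {f' : ι → ℝ} {s : ℝ}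
    (hf : ∀ k, HasDerivAt (fun s => f s k) (f' k) s) :
    HasDerivAt (fun s => ∑ k, f s k ^ 2) (2 * ∑ k, f s k * f' k) s := by
  rw [Finset.mul_sum]
  exact HasDerivAt.fun_sum fun k _ => ((hf k).fun_pow 2).congr_deriv (by ring)

section Slices

variable {E F : Type*} [NormedAddCommGroup E] [NormedSpace ℝ E] [NormedAddCommGroup F]
  [NormedSpace ℝ F]

theorem hasDerivAt_line (x v : E) : HasDerivAt (fun s : ℝ => x + s • v) v 0 := by
  simpa using ((hasDerivAt_id (0 : ℝ)).smul_const v).const_add x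

theorem fderiv_apply_eq_of_hasDerivAt_line {f : E → F} {x v : E} {f' : F}
    (hf : DifferentiableAt ℝ f x) (h : HasDerivAt (fun s : ℝ => f (x + s • v)) f' 0) :
    fderiv ℝ f x v = f' := by
  rw [← hf.lineDeriv_eq_fderiv]
  exact HasLineDerivAt.lineDeriv h

theorem hasDerivAt_comp_prodMk_left {f : ℝ × E → F} {t : ℝ} {x : E}
    (hf : DifferentiableAt ℝ f (t, x)) :
    HasDerivAt (fun s => f (s, x)) (fderiv ℝ f (t, x) (1, 0)) t :=
  hf.hasFDerivAt.comp_hasDerivAt t ((hasDerivAt_id t).prodMk (hasDerivAt_const t x))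

theorem hasDerivAt_comp_update {ι : Type*} [Fintype ι] [DecidableEq ι] {f : (ι → ℝ) → F}
    {x : ι → ℝ} (hf : DifferentiableAt ℝ f x) (i : ι) :
    HasDerivAt (fun s => f (Function.update x i s)) (fderiv ℝ f x (Pi.single i 1)) (x i) := by
  have hf' : HasFDerivAt f (fderiv ℝ f x) (Function.update x i (x i)) := by
    rw [Function.update_eq_self]
    exact hf.hasFDerivAt
  exact hf'.comp_hasDerivAt (x i) (hasDerivAt_update x i (x i))

end Slices

theorem hasDerivAt_setIntegral_of_continuous {E : Type*} [TopologicalSpace E] [T2Space E]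
    [MeasurableSpace E] [OpensMeasurableSpace E] {μ : Measure E} [IsFiniteMeasureOnCompacts μ]
    {K : Set E} (hK : IsCompact K) {f f' : ℝ × E → ℝ} (hf : Continuous f)
    (hf' : Continuous f') (hderiv : ∀ s x, HasDerivAt (fun s => f (s, x)) (f' (s, x)) s)
    (t : ℝ) :
    HasDerivAt (fun s => ∫ x in K, f (s, x) ∂μ) (∫ x in K, f' (t, x) ∂μ) t := by
  obtain ⟨C, hC⟩ := ((isCompact_closedBall t 1).prod hK).exists_bound_of_continuousOn
    hf'.continuousOn
  refine (hasDerivAt_integral_of_dominated_loc_of_deriv_le (bound := fun _ => C)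
    (Metric.closedBall_mem_nhds t one_pos)
    (Filter.Eventually.of_forall fun s =>
      (hf.comp (Continuous.prodMk_right s)).aestronglyMeasurable)
    ((hf.comp (Continuous.prodMk_right t)).continuousOn.integrableOn_compact hK)
    (hf'.comp (Continuous.prodMk_right t)).aestronglyMeasurable ?_
    (integrableOn_const hK.measure_lt_top.ne) (ae_of_all _ fun x s _ => hderiv s x)).2
  filter_upwards [ae_restrict_mem hK.measurableSet] with x hx s hs
  exact hC (s, x) ⟨hs, hx⟩

theorem integral_sum_fderiv_eq_zero_of_periodic {d : ℕ} {a b : Fin d → ℝ}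
    {F : Fin d → (Fin d → ℝ) → ℝ} (hF : ∀ i, ContDiff ℝ 1 (F i))
    (hper : ∀ i x, F i (x + (b i - a i) • Pi.single i 1) = F i x) :
    ∫ x in Set.Icc a b, ∑ i, fderiv ℝ (F i) x (Pi.single i 1) = 0 := by
  cases d with
  | zero => simp
  | succ n =>
    by_cases hab : a ≤ b
    swap
    · simp [Set.Icc_eq_empty hab]
    have hdiv : Continuous fun x => ∑ i, fderiv ℝ (F i) x (Pi.single i 1) :=
      continuous_finsetSum _ fun i _ =>
        ((hF i).continuous_fderiv one_ne_zero).clm_apply continuous_const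
    rw [integral_divergence_of_hasFDerivAt_off_countable' a b hab F
      (fun i x => fderiv ℝ (F i) x) ∅ Set.countable_empty
      (fun i => (hF i).continuous.continuousOn)
      (fun x _ i => ((hF i).differentiable one_ne_zero x).hasFDerivAt)
      (hdiv.continuousOn.integrableOn_compact isCompact_Icc)]
    refine Finset.sum_eq_zero fun i _ => ?_
    have hface : ∀ y, Fin.insertNth i (b i) y
        = Fin.insertNth i (a i) y + (b i - a i) • Pi.single i 1 := by
      intro y
      ext j
      refine Fin.succAboveCases i ?_ (fun k => ?_) j <;> simp
    simp only [hface, hper, sub_self]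

-- `∂p/∂(ρ, m, e) = (γ - 1) (‖V‖²/2, -V, 1)` depends on the state only through `V`.
noncomputable def pressureDeriv (d : ℕ) (γ : ℝ) (V : Fin d → ℝ) (c : Fin (d + 2) → ℝ) :
    ℝ :=
  (γ - 1) * (c (Fin.last (d + 1)) - ∑ j, V j * c (Fin.castSucc j.succ)
    + (∑ j, V j ^ 2) / 2 * c 0)

noncomputable def velocityDeriv (d : ℕ) (W c : Fin (d + 2) → ℝ) : Fin d → ℝ :=
  fun i => (c (Fin.castSucc i.succ) - vOf d W i * c 0) / W 0

-- `ρ' φ(σ) + ρ φ'(σ) σ'` for `φ(σ) = β σ^(1/(α+γ))`, `σ = p ρ^(-γ)`, `σ' = ρ^(-γ) (p' - γ p ρ'/ρ)`.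
noncomputable def hartenSDeriv (γ α β ρ p ρ' p' : ℝ) : ℝ :=
  β * ρ' * (p * ρ ^ (-γ)) ^ (1 / (α + γ))
    + β * ρ * (1 / (α + γ)) * (p * ρ ^ (-γ)) ^ (1 / (α + γ) - 1) * ρ ^ (-γ)
      * (p' - γ * p * ρ' / ρ)

noncomputable def eulerFluxDeriv (d : ℕ) (γ ρ p : ℝ) (V : Fin d → ℝ) (ρ' p' : ℝ)
    (V' : Fin d → ℝ) (i : Fin d) : Fin (d + 2) → ℝ :=
  Fin.cons (α := fun _ => ℝ) (ρ' * V i + ρ * V' i)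
    (Fin.snoc (fun j => ρ' * V i * V j + ρ * V' i * V j + ρ * V i * V' j
        + p' * (if j = i then 1 else 0))
      ((p' / (γ - 1) + ρ' * (∑ k, V k ^ 2) / 2 + ρ * ∑ k, V k * V' k + p') * V i
        + (p / (γ - 1) + ρ * (∑ k, V k ^ 2) / 2 + p) * V' i))

noncomputable def fluxHatDeriv (d : ℕ) (γ : ℝ) (i : Fin d) (W c : Fin (d + 2) → ℝ) :
    Fin (d + 2) → ℝ :=
  eulerFluxDeriv d γ (W 0) (pOf d γ W) (vOf d W) (c 0) (pressureDeriv d γ (vOf d W) c)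
    (velocityDeriv d W c) i

noncomputable def hartenShatDeriv (d : ℕ) (γ α β : ℝ) (W c : Fin (d + 2) → ℝ) : ℝ :=
  hartenSDeriv γ α β (W 0) (pOf d γ W) (c 0) (pressureDeriv d γ (vOf d W) c)

noncomputable def hartenGhat (d : ℕ) (γ α β : ℝ) (i : Fin d) (W : Fin (d + 2) → ℝ) : ℝ :=
  vOf d W i * hartenShat d γ α β W

-- The pressure equation `p_t + V·∇p + γ p div V = 0`, one flux direction at a time.
theorem pressureDeriv_eulerFluxDeriv {d : ℕ} {γ : ℝ} (hγ : γ ≠ 1) (ρ p : ℝ)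
    (V : Fin d → ℝ) (ρ' p' : ℝ) (V' : Fin d → ℝ) (i : Fin d) :
    pressureDeriv d γ V (eulerFluxDeriv d γ ρ p V ρ' p' V' i) = V i * p' + γ * p * V' i := by
  have hγ' : γ - 1 ≠ 0 := sub_ne_zero.2 hγ
  have hmom : ∑ j, V j * (ρ' * V i * V j + ρ * V' i * V j + ρ * V i * V' j
      + p' * (if j = i then 1 else 0))
      = (ρ' * V i + ρ * V' i) * ∑ j, V j ^ 2 + ρ * V i * ∑ j, V j * V' j + p' * V i := by
    calc _ = ∑ j, ((ρ' * V i + ρ * V' i) * V j ^ 2 + ρ * V i * (V j * V' j)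
            + p' * (if j = i then V j else 0)) :=
          Finset.sum_congr rfl fun j _ => by split_ifs <;> ring
      _ = _ := by simp [Finset.sum_add_distrib, Finset.mul_sum]
  simp only [pressureDeriv, eulerFluxDeriv, ← Fin.succ_last, ← Fin.succ_castSucc, Fin.cons_succ,
    Fin.snoc_last, Fin.snoc_castSucc, Fin.cons_zero, hmom]
  field_simp
  ring

-- Mass conservation and the pressure equation make `σ = p ρ^(-γ)` a transported quantity.
theorem hartenSDeriv_comp_flux {γ α β ρ : ℝ} (hρ : ρ ≠ 0) (p ρ' p' v v' : ℝ) :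
    hartenSDeriv γ α β ρ p (ρ' * v + ρ * v') (v * p' + γ * p * v')
      = v' * hartenS γ α β ρ p + v * hartenSDeriv γ α β ρ p ρ' p' := by
  simp only [hartenSDeriv, hartenS]
  field_simp
  ring

section CurveDerivatives

variable {d : ℕ} {γ α β s : ℝ}

theorem hasDerivAt_eulerFlux_comp {ρ p : ℝ → ℝ} {V : ℝ → Fin d → ℝ} {ρ' p' : ℝ}
    {V' : Fin d → ℝ} (hρ : HasDerivAt ρ ρ' s) (hp : HasDerivAt p p' s)
    (hV : HasDerivAt V V' s) (i : Fin d) :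
    HasDerivAt (fun s => eulerFlux d γ (ρ s) (p s) (V s) i)
      (eulerFluxDeriv d γ (ρ s) (p s) (V s) ρ' p' V' i) s := by
  have hVj : ∀ j, HasDerivAt (fun s => V s j) (V' j) s := hasDerivAt_pi.1 hV
  refine hasDerivAt_pi.2 fun k => Fin.cases ?_ (fun k => Fin.lastCases ?_ (fun j => ?_) k) k
  · simp only [eulerFlux, eulerFluxDeriv, Fin.cons_zero]
    exact hρ.fun_mul (hVj i)
  · simp only [eulerFlux, eulerFluxDeriv, Fin.cons_succ, Fin.snoc_last]
    exact ((((hp.div_const (γ - 1)).fun_add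
      ((hρ.fun_mul (hasDerivAt_sum_sq hVj)).div_const 2)).fun_add hp).fun_mul
        (hVj i)).congr_deriv (by ring)
  · simp only [eulerFlux, eulerFluxDeriv, Fin.cons_succ, Fin.snoc_castSucc]
    exact (((hρ.fun_mul (hVj i)).fun_mul (hVj j)).fun_add (hp.mul_const _)).congr_deriv
      (by ring)

theorem hasDerivAt_pOf_comp {g : ℝ → Fin (d + 2) → ℝ} {c : Fin (d + 2) → ℝ}
    (hg : HasDerivAt g c s) (h0 : g s 0 ≠ 0) :
    HasDerivAt (fun s => pOf d γ (g s)) (pressureDeriv d γ (vOf d (g s)) c) s := by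
  have hgk : ∀ k, HasDerivAt (fun s => g s k) (c k) s := hasDerivAt_pi.1 hg
  have hsq := hasDerivAt_sum_sq (f := fun s (j : Fin d) => g s (Fin.castSucc j.succ))
    fun (j : Fin d) => hgk (Fin.castSucc j.succ)
  have h := ((hgk (Fin.last (d + 1))).fun_sub (hsq.fun_div ((hgk 0).const_mul 2)
    (mul_ne_zero two_ne_zero h0))).const_mul (γ - 1)
  unfold pOf
  refine h.congr_deriv ?_
  simp only [pressureDeriv, vOf, div_pow, ← Finset.sum_div, div_mul_eq_mul_div]
  field_simp
  ring

theorem hasDerivAt_vOf_comp {g : ℝ → Fin (d + 2) → ℝ} {c : Fin (d + 2) → ℝ}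
    (hg : HasDerivAt g c s) (h0 : g s 0 ≠ 0) :
    HasDerivAt (fun s => vOf d (g s)) (velocityDeriv d (g s) c) s := by
  have hgk : ∀ k, HasDerivAt (fun s => g s k) (c k) s := hasDerivAt_pi.1 hg
  refine hasDerivAt_pi.2 fun i => ((hgk _).fun_div (hgk 0) h0).congr_deriv ?_
  simp only [velocityDeriv, vOf]
  field_simp

theorem hasDerivAt_hartenS_comp {ρ p : ℝ → ℝ} {ρ' p' : ℝ} (hρ : HasDerivAt ρ ρ' s)
    (hp : HasDerivAt p p' s) (hρ0 : 0 < ρ s) (hp0 : 0 < p s) :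
    HasDerivAt (fun s => hartenS γ α β (ρ s) (p s))
      (hartenSDeriv γ α β (ρ s) (p s) ρ' p') s := by
  have hσ : 0 < p s * ρ s ^ (-γ) := mul_pos hp0 (Real.rpow_pos_of_pos hρ0 _)
  have hR := hρ.rpow_const (p := -γ) (Or.inl hρ0.ne')
  refine ((hρ.const_mul β).fun_mul ((hp.fun_mul hR).rpow_const (p := 1 / (α + γ))
    (Or.inl hσ.ne'))).congr_deriv ?_
  rw [hartenSDeriv, Real.rpow_sub_one hρ0.ne']
  field_simp
  ring

theorem hasDerivAt_fluxHat_comp {g : ℝ → Fin (d + 2) → ℝ} {c : Fin (d + 2) → ℝ}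
    (hg : HasDerivAt g c s) (h0 : g s 0 ≠ 0) (i : Fin d) :
    HasDerivAt (fun s => fluxHat d γ i (g s)) (fluxHatDeriv d γ i (g s) c) s :=
  hasDerivAt_eulerFlux_comp (hasDerivAt_pi.1 hg 0) (hasDerivAt_pOf_comp hg h0)
    (hasDerivAt_vOf_comp hg h0) i

theorem hasDerivAt_hartenShat_comp {g : ℝ → Fin (d + 2) → ℝ} {c : Fin (d + 2) → ℝ}
    (hg : HasDerivAt g c s) (h0 : 0 < g s 0) (hp : 0 < pOf d γ (g s)) :
    HasDerivAt (fun s => hartenShat d γ α β (g s)) (hartenShatDeriv d γ α β (g s) c) s :=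
  hasDerivAt_hartenS_comp (hasDerivAt_pi.1 hg 0) (hasDerivAt_pOf_comp hg h0.ne') h0 hp

end CurveDerivatives

section StateSpace

variable {d : ℕ} {γ α β : ℝ} {W : Fin (d + 2) → ℝ}

theorem ne_one_of_pOf_pos (hp : 0 < pOf d γ W) : γ ≠ 1 := by
  rintro rfl
  simp [pOf] at hp

theorem hartenShatDeriv_fluxHatDeriv (h0 : W 0 ≠ 0) (hγ : γ ≠ 1) (i : Fin d)
    (c : Fin (d + 2) → ℝ) :
    hartenShatDeriv d γ α β W (fluxHatDeriv d γ i W c)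
      = velocityDeriv d W c i * hartenShat d γ α β W
        + vOf d W i * hartenShatDeriv d γ α β W c := by
  have hmass : fluxHatDeriv d γ i W c 0 = c 0 * vOf d W i + W 0 * velocityDeriv d W c i := by
    simp [fluxHatDeriv, eulerFluxDeriv]
  rw [hartenShatDeriv, fluxHatDeriv, pressureDeriv_eulerFluxDeriv hγ, ← fluxHatDeriv, hmass,
    hartenSDeriv_comp_flux h0]
  rfl

theorem contDiffAt_pOf {n : WithTop ℕ∞} (h0 : W 0 ≠ 0) : ContDiffAt ℝ n (pOf d γ) W := by
  unfold pOf
  fun_prop (disch := simpa using h0)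

theorem contDiffAt_vOf {n : WithTop ℕ∞} (h0 : W 0 ≠ 0) (i : Fin d) :
    ContDiffAt ℝ n (fun W => vOf d W i) W := by
  unfold vOf
  fun_prop (disch := exact h0)

theorem contDiffAt_hartenShat {n : WithTop ℕ∞} (h0 : 0 < W 0) (hp : 0 < pOf d γ W) :
    ContDiffAt ℝ n (hartenShat d γ α β) W := by
  have hσ : 0 < pOf d γ W * W 0 ^ (-γ) := mul_pos hp (Real.rpow_pos_of_pos h0 _)
  have hρ : ContDiffAt ℝ n (fun W : Fin (d + 2) → ℝ => W 0) W := contDiffAt_apply _ _ _ _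
  exact (contDiffAt_const.mul hρ).mul (((contDiffAt_pOf h0.ne').mul
    (hρ.rpow_const_of_ne h0.ne')).rpow_const_of_ne hσ.ne')

theorem contDiffAt_hartenGhat {n : WithTop ℕ∞} (h0 : 0 < W 0) (hp : 0 < pOf d γ W)
    (i : Fin d) : ContDiffAt ℝ n (hartenGhat d γ α β i) W :=
  (contDiffAt_vOf h0.ne' i).mul (contDiffAt_hartenShat h0 hp)

theorem fderiv_hartenShat_apply (h0 : 0 < W 0) (hp : 0 < pOf d γ W) (c : Fin (d + 2) → ℝ) :
    fderiv ℝ (hartenShat d γ α β) W c = hartenShatDeriv d γ α β W c := by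
  have h := hasDerivAt_hartenShat_comp (α := α) (β := β) (hasDerivAt_line W c)
    (by simpa using h0) (by simpa using hp)
  simp only [zero_smul, add_zero] at h
  exact fderiv_apply_eq_of_hasDerivAt_line
    ((contDiffAt_hartenShat (n := 1) h0 hp).differentiableAt one_ne_zero) h

-- `(Ŝ, Ĝ)` is an entropy pair for the Euler flux: `DĜ^(i) = DŜ ∘ DF̂^(i)` on `D`.
theorem fderiv_hartenGhat_apply (h0 : 0 < W 0) (hp : 0 < pOf d γ W) (i : Fin d)
    (c : Fin (d + 2) → ℝ) :
    fderiv ℝ (hartenGhat d γ α β i) W c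
      = fderiv ℝ (hartenShat d γ α β) W (fluxHatDeriv d γ i W c) := by
  have h := (hasDerivAt_pi.1 (hasDerivAt_vOf_comp (hasDerivAt_line W c)
    (by simpa using h0.ne')) i).fun_mul (hasDerivAt_hartenShat_comp (α := α) (β := β)
      (hasDerivAt_line W c) (by simpa using h0) (by simpa using hp))
  simp only [zero_smul, add_zero] at h
  rw [fderiv_apply_eq_of_hasDerivAt_line
      ((contDiffAt_hartenGhat (n := 1) h0 hp i).differentiableAt one_ne_zero) h,
    fderiv_hartenShat_apply h0 hp, hartenShatDeriv_fluxHatDeriv h0.ne' (ne_one_of_pOf_pos hp)]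

end StateSpace

theorem harten_entropy_balance {d : ℕ} {γ α β : ℝ} {U : ℝ × (Fin d → ℝ) → Fin (d + 2) → ℝ}
    (hU : Differentiable ℝ U) {t : ℝ} {x : Fin d → ℝ} (h0 : 0 < U (t, x) 0)
    (hp : 0 < pOf d γ (U (t, x)))
    (hEuler : deriv (fun s => U (s, x)) t +
      ∑ i, deriv (fun s => fluxHat d γ i (U (t, Function.update x i s))) (x i) = 0) :
    fderiv ℝ (fun z => hartenShat d γ α β (U z)) (t, x) (1, 0)
      + ∑ i, fderiv ℝ (fun y => hartenGhat d γ α β i (U (t, y))) x (Pi.single i 1) = 0 := by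
  set u : (Fin d → ℝ) → Fin (d + 2) → ℝ := fun y => U (t, y)
  have hu : Differentiable ℝ u := hU.comp ((differentiable_const t).prodMk differentiable_id)
  have hS := (contDiffAt_hartenShat (α := α) (β := β) (n := 1) h0 hp).differentiableAt
    one_ne_zero
  have hG := fun i => (contDiffAt_hartenGhat (α := α) (β := β) (n := 1) h0 hp i).differentiableAt
    one_ne_zero
  have hflux : ∀ i, deriv (fun s => fluxHat d γ i (u (Function.update x i s))) (x i)
      = fluxHatDeriv d γ i (U (t, x)) (fderiv ℝ u x (Pi.single i 1)) := fun i => by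
    simpa using (hasDerivAt_fluxHat_comp (hasDerivAt_comp_update (hu x) i)
      (by simpa using h0.ne') i).deriv
  rw [(hasDerivAt_comp_prodMk_left (hU _)).deriv, Finset.sum_congr rfl fun i _ => hflux i]
    at hEuler
  calc _ = fderiv ℝ (hartenShat d γ α β) (U (t, x)) (fderiv ℝ U (t, x) (1, 0))
        + ∑ i, fderiv ℝ (hartenShat d γ α β) (U (t, x))
          (fluxHatDeriv d γ i (U (t, x)) (fderiv ℝ u x (Pi.single i 1))) := by
        rw [fderiv_fun_comp (t, x) hS (hU _)]
        congr 1
        refine Finset.sum_congr rfl fun i _ => ?_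
        rw [fderiv_fun_comp x (hG i) (hu x)]
        exact fderiv_hartenGhat_apply h0 hp i _
    _ = 0 := by rw [← map_sum, ← map_add, hEuler, map_zero]

theorem harten_total_entropy_conservation_periodic_general
    (d : ℕ) (γ α β : ℝ) (L : ℝ)
    (U : ℝ × (Fin d → ℝ) → Fin (d + 2) → ℝ)
    (hU : ContDiff ℝ 1 U)
    (hD : ∀ (t : ℝ) (x : Fin d → ℝ), 0 < U (t, x) 0 ∧ 0 < pOf d γ (U (t, x)))
    (hEuler : ∀ (t : ℝ) (x : Fin d → ℝ),
      deriv (fun s => U (s, x)) t +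
        ∑ i, deriv (fun s => fluxHat d γ i (U (t, Function.update x i s))) (x i)
        = 0)
    (hperiodic : ∀ (t : ℝ) (x : Fin d → ℝ) (i : Fin d),
      U (t, x + L • (Pi.single i 1 : Fin d → ℝ)) = U (t, x)) :
    ∀ t : ℝ,
      HasDerivAt
        (fun s => ∫ x in Set.Icc (0 : Fin d → ℝ) (fun _ => L),
          hartenShat d γ α β (U (s, x)))
        0 t := by
  intro t
  have hSU : ContDiff ℝ 1 fun z => hartenShat d γ α β (U z) :=
    contDiff_iff_contDiffAt.2 fun z =>
      (contDiffAt_hartenShat (hD z.1 z.2).1 (hD z.1 z.2).2).comp z hU.contDiffAt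
  have hGU : ∀ i, ContDiff ℝ 1 fun y => hartenGhat d γ α β i (U (t, y)) := fun i =>
    contDiff_iff_contDiffAt.2 fun y => (contDiffAt_hartenGhat (hD t y).1 (hD t y).2 i).comp y
      (f := fun y => U (t, y)) (hU.comp (contDiff_const.prodMk contDiff_id)).contDiffAt
  have hdiv := integral_sum_fderiv_eq_zero_of_periodic (a := 0) (b := fun _ => L) hGU
    (fun i x => by simp [hperiodic])
  refine (hasDerivAt_setIntegral_of_continuous isCompact_Icc hSU.continuous
    ((hSU.continuous_fderiv one_ne_zero).clm_apply continuous_const)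
    (fun s x => hasDerivAt_comp_prodMk_left (hSU.differentiable one_ne_zero _)) t).congr_deriv ?_
  calc _ = ∫ x in Set.Icc (0 : Fin d → ℝ) (fun _ => L),
        -∑ i, fderiv ℝ (fun y => hartenGhat d γ α β i (U (t, y))) x (Pi.single i 1) :=
        integral_congr_ae (ae_of_all _ fun x => eq_neg_of_add_eq_zero_left
          (harten_entropy_balance (hU.differentiable one_ne_zero) (hD t x).1 (hD t x).2
            (hEuler t x)))
    _ = 0 := by rw [integral_neg, hdiv, neg_zero]

/-- Under the Harten setup, for a continuously differentiable, spatially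
`L`-periodic solution of the Euler equations taking values in
`D = {(ρ, m, e) : ρ > 0, (γ−1)(e − ‖m‖²/(2ρ)) > 0}`, the total entropy
`t ↦ ∫_{[0,L]^d} Ŝ(U(t,x)) dx` is constant in `t`: its derivative vanishes for
every `t`. -/
theorem harten_total_entropy_conservation_periodic
    (d : ℕ) (hd : 1 ≤ d) (γ α β : ℝ) (hγ : 1 < γ) (hα : 0 < α ∨ α < -γ)
    (hβ : β = -(γ + α) / (γ - 1)) (L : ℝ) (hL : 0 < L)
    (U : ℝ × (Fin d → ℝ) → Fin (d + 2) → ℝ)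
    (hU : ContDiff ℝ 1 U)
    (hD : ∀ (t : ℝ) (x : Fin d → ℝ), 0 < U (t, x) 0 ∧ 0 < pOf d γ (U (t, x)))
    (hEuler : ∀ (t : ℝ) (x : Fin d → ℝ),
      deriv (fun s => U (s, x)) t +
        ∑ i, deriv (fun s => fluxHat d γ i (U (t, Function.update x i s))) (x i)
        = 0)
    (hperiodic : ∀ (t : ℝ) (x : Fin d → ℝ) (i : Fin d),
      U (t, x + L • (Pi.single i 1 : Fin d → ℝ)) = U (t, x)) :
    ∀ t : ℝ,
      HasDerivAt
        (fun s => ∫ x in Set.Icc (0 : Fin d → ℝ) (fun _ => L),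
          hartenShat d γ α β (U (s, x)))
        0 t :=
  harten_total_entropy_conservation_periodic_general d γ α β L U hU hD hEuler hperiodic
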